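/- Let m ≥ 0 and t₀,…,t_{2^m} ∈ ℝ, and let u : V_m → ℝ be the unique minimizer of the level-m energy E_m subject to u(x_j) = t_j for all bottom-row points x_j (j = 0,…,2^m); equivalently, u is graph-harmonic at every vertex of V_m not in the bottom row, including at q₀. Then u(q₀) = 2^{−(m+1)}·(t₀ + 2t₁ + 2t₂ + ⋯ + 2t_{2^m−1} + t_{2^m}). -/

import Mathlib

open scoped BigOperators

noncomputable section

namespace SGPaper

/-- The three corners of the Sierpinski gasket:
`q₀ = (1/2, √3/2)`, `q₁ = (0,0)`, `q₂ = (1,0)`. -/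
def q : Fin 3 → ℝ × ℝ
  | 0 => (1 / 2, Real.sqrt 3 / 2)
  | 1 => (0, 0)
  | 2 => (1, 0)

/-- The contraction map towards corner `i`: `F_i(x) = (x + q_i)/2`. -/
def Fmap (i : Fin 3) (x : ℝ × ℝ) : ℝ × ℝ := (2⁻¹ : ℝ) • (x + q i)

/-- `Fword w = F_{w₁} ∘ ⋯ ∘ F_{w_m}` for the word `w = w₁⋯w_m`. -/
def Fword (w : List (Fin 3)) : ℝ × ℝ → ℝ × ℝ :=
  w.foldr (fun i f => Fmap i ∘ f) id

/-- The level-`m` vertex set of the Sierpinski gasket: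
`V_m = ⋃_{|w| = m} F_w({q₀, q₁, q₂})`. -/
def V (m : ℕ) : Set (ℝ × ℝ) :=
  {x | ∃ w : List (Fin 3), w.length = m ∧ ∃ i : Fin 3, x = Fword w (q i)}

/-- `x` and `y` are `m`-neighbors: they are distinct and belong to a common
level-`m` cell `F_w({q₀, q₁, q₂})`. -/
def Nbr (m : ℕ) (x y : ℝ × ℝ) : Prop :=
  x ≠ y ∧ ∃ w : List (Fin 3), w.length = m ∧
    (∃ i : Fin 3, x = Fword w (q i)) ∧ (∃ j : Fin 3, y = Fword w (q j))

/-- The value `(u x - u y)²` on the unordered pair `{x, y}`. -/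
def edgeVal (u : ℝ × ℝ → ℝ) : Sym2 (ℝ × ℝ) → ℝ :=
  Sym2.lift ⟨fun x y => (u x - u y) ^ 2, fun _ _ => by ring⟩

/-- The unordered pair `e` is an edge of the level-`m` graph `Γ_m`. -/
def IsEdge (m : ℕ) (e : Sym2 (ℝ × ℝ)) : Prop :=
  ∃ x y : ℝ × ℝ, Nbr m x y ∧ e = s(x, y)

/-- The level-`m` graph energy: `E_m(u) = (5/3)^m Σ (u x − u y)²`, the sum being over
unordered `m`-neighbor pairs `{x, y}` (a finite set, so `tsum` is the honest sum). -/
def Energy (m : ℕ) (u : ℝ × ℝ → ℝ) : ℝ :=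
  (5 / 3 : ℝ) ^ m * ∑' e : {e : Sym2 (ℝ × ℝ) // IsEdge m e}, edgeVal u e

/-- `Q_E(v)`: minimal level-`m` energy among functions `u : V_m → ℝ` agreeing
with `v` on `E` (the minimum is attained, so it equals this infimum). -/
def Q (m : ℕ) (E : Set (ℝ × ℝ)) (v : ℝ × ℝ → ℝ) : ℝ :=
  sInf {r | ∃ u : ℝ × ℝ → ℝ, (∀ x ∈ E, u x = v x) ∧ r = Energy m u}

/-- Indicator function of the point `z`. -/
def ind (z : ℝ × ℝ) : ℝ × ℝ → ℝ := fun t => if t = z then 1 else 0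

/-- The conductance `c^E_{x,y} = (Q_E(𝟙_x) + Q_E(𝟙_y) − Q_E(𝟙_x + 𝟙_y))/2`
between `x, y ∈ E`, computed at level `m`. -/
def cond (m : ℕ) (E : Set (ℝ × ℝ)) (x y : ℝ × ℝ) : ℝ :=
  (Q m E (ind x) + Q m E (ind y) - Q m E (ind x + ind y)) / 2

/-- The `j`-th bottom-row point of `V_n`: `x_j = q₁ + (j/2ⁿ)(q₂ − q₁)`. -/
def xb (n j : ℕ) : ℝ × ℝ := q 1 + ((j : ℝ) / 2 ^ n) • (q 2 - q 1)

/-- The bottom row `Ẽ_n = {x₀, …, x_{2ⁿ}}` of `V_n`. -/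
def Ebot (n : ℕ) : Set (ℝ × ℝ) := {p | ∃ j ≤ 2 ^ n, p = xb n j}

/-- The bottom row together with the top point: `E_n⁺ = {q₀, x₀, …, x_{2ⁿ}}`. -/
def Eplus (n : ℕ) : Set (ℝ × ℝ) := insert (q 0) (Ebot n)

/-!
Write the level-`m` energy as a quadratic form with polarization `E_m(v, w)` and test it against
indicators: `E_m(v, 𝟙_z)` is the graph Laplacian of `v` at `z`, and a minimizer is harmonic off
the bottom row. Since `V_{m+1}` is the union of the three copies `F_i(V_m)`, which meet only at
the junctions `F_i q_j = F_j q_i`, harmonicity passes to each `v ∘ F_i`, and the Laplacian at a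
vertex is `5/3` times the sum of the Laplacians of its preimages.

By induction on `m`: a function harmonic off the corners has the Laplacian
`3 v(q_i) - Σ_j v(q_j)` of the single triangle at each corner `q_i`, and a function harmonic off
`{q₀} ∪` bottom row has Laplacian `λ_m (v(q₀) - T_m v)` at `q₀`, where `T_m v` is the trapezoid
average of `v` along the bottom row and `λ_{m+1} = 10 λ_m / (3 (1 + λ_m))` (`topConductance`);
in both inductive steps the junction equations eliminate the values at the junctions. For the
minimizer the Laplacian at `q₀` vanishes and `λ_m > 0`, so `u(q₀) = T_m u`, which is the claimed
weighted sum.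
-/

/-- Barycentric coordinates with respect to `q 0, q 1, q 2`. The cell `F_i(triangle)` lies in
`{1/2 ≤ baryCoord i}`, which is what separates distinct cells. -/
def baryCoord : Fin 3 → ℝ × ℝ → ℝ
  | 0, p => 2 * p.2 / Real.sqrt 3
  | 1, p => 1 - p.1 - p.2 / Real.sqrt 3
  | 2, p => p.1 - p.2 / Real.sqrt 3

lemma baryCoord_q (i j : Fin 3) : baryCoord j (q i) = if i = j then 1 else 0 := by
  have : Real.sqrt 3 ≠ 0 := by positivity
  fin_cases i <;> fin_cases j <;> simp [baryCoord, q] <;> field_simp <;> norm_num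

lemma baryCoord_Fmap (i j : Fin 3) (p : ℝ × ℝ) :
    baryCoord j (Fmap i p) = (baryCoord j p + if i = j then 1 else 0) / 2 := by
  rw [← baryCoord_q]
  fin_cases i <;> fin_cases j <;> simp [baryCoord, Fmap, q] <;> ring

lemma sum_baryCoord (p : ℝ × ℝ) : ∑ j, baryCoord j p = 1 := by
  simp only [Fin.sum_univ_three, baryCoord]
  ring

lemma eq_of_baryCoord_eq {p p' : ℝ × ℝ} (h : ∀ j, baryCoord j p = baryCoord j p') : p = p' := by
  have h0 := h 0
  have h2 := h 2
  have : Real.sqrt 3 ≠ 0 := by positivity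
  simp only [baryCoord] at h0 h2
  have hy : p.2 = p'.2 := by field_simp at h0; linarith
  exact Prod.ext (by rw [hy] at h2; linarith) hy

def triangle : Set (ℝ × ℝ) := {p | ∀ j, 0 ≤ baryCoord j p}

lemma q_mem_triangle (i : Fin 3) : q i ∈ triangle := fun j => by
  rw [baryCoord_q]; split_ifs <;> norm_num

lemma Fmap_mem_triangle {p : ℝ × ℝ} (hp : p ∈ triangle) (i : Fin 3) : Fmap i p ∈ triangle :=
  fun j => by rw [baryCoord_Fmap]; have := hp j; split_ifs <;> linarith

lemma baryCoord_le_one {p : ℝ × ℝ} (hp : p ∈ triangle) (j : Fin 3) : baryCoord j p ≤ 1 := by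
  rw [← sum_baryCoord p]
  exact Finset.single_le_sum (fun k _ => hp k) (Finset.mem_univ j)

lemma eq_q_of_baryCoord_eq_one {p : ℝ × ℝ} (hp : p ∈ triangle) {i : Fin 3}
    (h : baryCoord i p = 1) : p = q i := by
  have hsum := sum_baryCoord p
  rw [← Finset.add_sum_erase _ _ (Finset.mem_univ i), h, add_eq_left] at hsum
  refine eq_of_baryCoord_eq fun j => ?_
  rw [baryCoord_q]
  split_ifs with hij
  · exact hij ▸ h
  · exact (Finset.sum_eq_zero_iff_of_nonneg fun k _ => hp k).1 hsum j
      (Finset.mem_erase.2 ⟨Ne.symm hij, Finset.mem_univ j⟩)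

lemma Fmap_injective (i : Fin 3) : Function.Injective (Fmap i) := by
  intro x y h
  simpa [Fmap] using h

lemma Fmap_q_self (i : Fin 3) : Fmap i (q i) = q i := by
  rw [Fmap, ← two_smul ℝ, smul_smul]; norm_num

lemma Fmap_q_comm (i j : Fin 3) : Fmap i (q j) = Fmap j (q i) := by
  rw [Fmap, Fmap, add_comm]

lemma half_le_baryCoord_Fmap_self {p : ℝ × ℝ} (hp : p ∈ triangle) (i : Fin 3) :
    1 / 2 ≤ baryCoord i (Fmap i p) := by
  rw [baryCoord_Fmap, if_pos rfl]; linarith [hp i]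

lemma baryCoord_Fmap_of_ne {i j : Fin 3} (hij : i ≠ j) (p : ℝ × ℝ) :
    baryCoord j (Fmap i p) = baryCoord j p / 2 := by
  rw [baryCoord_Fmap, if_neg hij, add_zero]

lemma eq_q_of_Fmap_eq_Fmap {i j : Fin 3} (hij : i ≠ j) {p p' : ℝ × ℝ} (hp : p ∈ triangle)
    (hp' : p' ∈ triangle) (h : Fmap i p = Fmap j p') : p = q j := by
  have hj := congrArg (baryCoord j) h
  rw [baryCoord_Fmap_of_ne hij, baryCoord_Fmap, if_pos rfl] at hj
  exact eq_q_of_baryCoord_eq_one hp (le_antisymm (baryCoord_le_one hp j) (by linarith [hp' j]))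

lemma Fmap_q_ne_q {i j : Fin 3} (hij : i ≠ j) (k : Fin 3) : Fmap i (q j) ≠ q k := by
  intro h
  have hi := congrArg (baryCoord i) h
  rw [baryCoord_Fmap, baryCoord_q, baryCoord_q, if_neg (Ne.symm hij), if_pos rfl] at hi
  split_ifs at hi <;> norm_num at hi

lemma q_injective : Function.Injective q := by
  intro i j h
  by_contra hij
  have := congrArg (baryCoord i) h
  rw [baryCoord_q, baryCoord_q, if_pos rfl, if_neg (Ne.symm hij)] at this
  norm_num at this

lemma xb_eq (n j : ℕ) : xb n j = ((j : ℝ) / 2 ^ n, 0) := by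
  simp [xb, q]

lemma baryCoord_xb_zero (n j : ℕ) : baryCoord 0 (xb n j) = 0 := by
  simp [xb_eq, baryCoord]

lemma baryCoord_xb_one (n j : ℕ) : baryCoord 1 (xb n j) = 1 - j / 2 ^ n := by
  simp [xb_eq, baryCoord]

lemma baryCoord_xb_two (n j : ℕ) : baryCoord 2 (xb n j) = j / 2 ^ n := by
  simp [xb_eq, baryCoord]

lemma xb_zero (n : ℕ) : xb n 0 = q 1 := by
  simp [xb_eq, q]

lemma xb_two_pow (n : ℕ) : xb n (2 ^ n) = q 2 := by
  simp [xb_eq, q]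

lemma Fmap_one_xb (m j : ℕ) : Fmap 1 (xb m j) = xb (m + 1) j := by
  simp only [Fmap, xb_eq, q, Prod.mk_add_mk, add_zero, Prod.smul_mk, smul_eq_mul, mul_zero,
    pow_succ, Prod.mk.injEq, and_true]
  ring

lemma Fmap_two_xb (m j : ℕ) : Fmap 2 (xb m j) = xb (m + 1) (2 ^ m + j) := by
  simp only [Fmap, xb_eq, q, Prod.mk_add_mk, add_zero, Prod.smul_mk, smul_eq_mul, mul_zero,
    Nat.cast_add, Nat.cast_pow, Nat.cast_ofNat, pow_succ, Prod.mk.injEq, and_true]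
  field_simp
  ring

lemma mem_Ebot_of_Fmap_one_mem {m : ℕ} {z : ℝ × ℝ} (hz : z ∈ triangle)
    (h : Fmap 1 z ∈ Ebot (m + 1)) : z ∈ Ebot m := by
  obtain ⟨j, -, hzj⟩ := h
  have hj : j ≤ 2 ^ m := by
    have hb := half_le_baryCoord_Fmap_self hz 1
    rw [hzj, baryCoord_xb_one, pow_succ, le_sub_iff_add_le, ← le_sub_iff_add_le',
      div_le_iff₀ (by positivity)] at hb
    exact_mod_cast (by linarith : (j : ℝ) ≤ 2 ^ m)
  exact ⟨j, hj, Fmap_injective 1 (hzj.trans (Fmap_one_xb m j).symm)⟩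

lemma mem_Ebot_of_Fmap_two_mem {m : ℕ} {z : ℝ × ℝ} (hz : z ∈ triangle)
    (h : Fmap 2 z ∈ Ebot (m + 1)) : z ∈ Ebot m := by
  obtain ⟨j, hj, hzj⟩ := h
  have hj' : 2 ^ m ≤ j := by
    have hb := half_le_baryCoord_Fmap_self hz 2
    rw [hzj, baryCoord_xb_two, pow_succ, le_div_iff₀ (by positivity)] at hb
    exact_mod_cast (by linarith : (2 : ℝ) ^ m ≤ j)
  obtain ⟨k, rfl⟩ := Nat.exists_eq_add_of_le hj'
  exact ⟨k, by rw [pow_succ] at hj; omega, Fmap_injective 2 (hzj.trans (Fmap_two_xb m k).symm)⟩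

def edges : ℕ → Finset (Sym2 (ℝ × ℝ))
  | 0 => {s(q 0, q 1), s(q 0, q 2), s(q 1, q 2)}
  | m + 1 => Finset.univ.biUnion fun i => (edges m).image (Sym2.map (Fmap i))

lemma isEdge_zero_iff {e : Sym2 (ℝ × ℝ)} : IsEdge 0 e ↔ e ∈ edges 0 := by
  simp only [edges, Finset.mem_insert, Finset.mem_singleton]
  constructor
  · rintro ⟨x, y, ⟨hxy, w, hw, ⟨i, rfl⟩, ⟨j, rfl⟩⟩, rfl⟩
    obtain rfl := List.length_eq_zero_iff.1 hw
    fin_cases i <;> fin_cases j <;> simp_all [Fword, Sym2.eq_swap]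
  · have hne : ∀ i j : Fin 3, i ≠ j → Nbr 0 (q i) (q j) := fun i j hij =>
      ⟨q_injective.ne hij, [], rfl, ⟨i, rfl⟩, ⟨j, rfl⟩⟩
    rintro (rfl | rfl | rfl)
    exacts [⟨_, _, hne 0 1 (by decide), rfl⟩, ⟨_, _, hne 0 2 (by decide), rfl⟩,
      ⟨_, _, hne 1 2 (by decide), rfl⟩]

lemma isEdge_succ_iff {m : ℕ} {e : Sym2 (ℝ × ℝ)} :
    IsEdge (m + 1) e ↔ ∃ i e', IsEdge m e' ∧ e = Sym2.map (Fmap i) e' := by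
  constructor
  · rintro ⟨x, y, ⟨hxy, w, hw, ⟨a, rfl⟩, ⟨b, rfl⟩⟩, rfl⟩
    obtain ⟨i, w, rfl⟩ := List.exists_cons_of_length_eq_add_one hw
    refine ⟨i, s(Fword w (q a), Fword w (q b)),
      ⟨_, _, ⟨fun h => hxy (congrArg (Fmap i) h), w, by simpa using hw, ⟨a, rfl⟩, ⟨b, rfl⟩⟩, rfl⟩,
      rfl⟩
  · rintro ⟨i, e', ⟨x, y, ⟨hxy, w, hw, ⟨a, rfl⟩, ⟨b, rfl⟩⟩, rfl⟩, rfl⟩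
    exact ⟨_, _, ⟨(Fmap_injective i).ne hxy, i :: w, by simp [hw], ⟨a, rfl⟩, ⟨b, rfl⟩⟩, rfl⟩

lemma isEdge_iff_mem_edges {m : ℕ} {e : Sym2 (ℝ × ℝ)} : IsEdge m e ↔ e ∈ edges m := by
  induction m generalizing e with
  | zero => exact isEdge_zero_iff
  | succ m ih =>
    simp only [isEdge_succ_iff, ih, edges, Finset.mem_biUnion, Finset.mem_univ, true_and,
      Finset.mem_image]
    constructor <;> rintro ⟨i, e', he', rfl⟩ <;> exact ⟨i, e', he', rfl⟩

lemma Fword_q_mem_triangle (w : List (Fin 3)) (i : Fin 3) : Fword w (q i) ∈ triangle := by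
  induction w with
  | nil => exact q_mem_triangle i
  | cons a w ih => exact Fmap_mem_triangle ih a

lemma exists_of_mem_edges {m : ℕ} {e : Sym2 (ℝ × ℝ)} (he : e ∈ edges m) :
    ∃ x y, x ∈ triangle ∧ y ∈ triangle ∧ x ≠ y ∧ e = s(x, y) := by
  obtain ⟨x, y, ⟨hxy, w, -, ⟨a, rfl⟩, ⟨b, rfl⟩⟩, rfl⟩ := isEdge_iff_mem_edges.2 he
  exact ⟨_, _, Fword_q_mem_triangle w a, Fword_q_mem_triangle w b, hxy, rfl⟩

lemma disjoint_image_edges (m : ℕ) {i j : Fin 3} (hij : i ≠ j) :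
    Disjoint ((edges m).image (Sym2.map (Fmap i))) ((edges m).image (Sym2.map (Fmap j))) := by
  simp only [Finset.disjoint_left, Finset.mem_image, not_exists, not_and]
  rintro _ ⟨e, he, rfl⟩ e' he' heq
  obtain ⟨x, y, hx, hy, hxy, rfl⟩ := exists_of_mem_edges he
  obtain ⟨x', y', hx', hy', -, rfl⟩ := exists_of_mem_edges he'
  simp only [Sym2.map_mk, Sym2.eq_iff] at heq
  apply hxy
  rcases heq with ⟨h1, h2⟩ | ⟨h1, h2⟩
  · rw [eq_q_of_Fmap_eq_Fmap hij hx hx' h1.symm, eq_q_of_Fmap_eq_Fmap hij hy hy' h2.symm]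
  · rw [eq_q_of_Fmap_eq_Fmap hij hx hy' h2.symm, eq_q_of_Fmap_eq_Fmap hij hy hx' h1.symm]

def edgeProd (v w : ℝ × ℝ → ℝ) : Sym2 (ℝ × ℝ) → ℝ :=
  Sym2.lift ⟨fun x y => (v x - v y) * (w x - w y), fun _ _ => by ring⟩

def energyForm (m : ℕ) (v w : ℝ × ℝ → ℝ) : ℝ :=
  (5 / 3 : ℝ) ^ m * ∑ e ∈ edges m, edgeProd v w e

lemma energy_eq_sum (m : ℕ) (u : ℝ × ℝ → ℝ) :
    Energy m u = (5 / 3 : ℝ) ^ m * ∑ e ∈ edges m, edgeVal u e := by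
  have h : IsEdge m = (· ∈ edges m) := funext fun _ => propext isEdge_iff_mem_edges
  rw [Energy, h, Finset.tsum_subtype (edges m) (edgeVal u)]

lemma energy_add_smul (m : ℕ) (u w : ℝ × ℝ → ℝ) (s : ℝ) :
    Energy m (u + s • w) = Energy m u + 2 * s * energyForm m u w + s ^ 2 * Energy m w := by
  have h : ∀ e, edgeVal (u + s • w) e =
      edgeVal u e + 2 * s * edgeProd u w e + s ^ 2 * edgeVal w e := by
    refine Sym2.ind fun x y => ?_
    simp only [edgeVal, edgeProd, Sym2.lift_mk, Pi.add_apply, Pi.smul_apply, smul_eq_mul]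
    ring
  simp only [energy_eq_sum, energyForm, h, Finset.sum_add_distrib, ← Finset.mul_sum]
  ring

lemma energyForm_eq_zero_of_forall_energy_le {m : ℕ} {u w : ℝ × ℝ → ℝ}
    (h : ∀ s : ℝ, Energy m u ≤ Energy m (u + s • w)) : energyForm m u w = 0 := by
  have hdisc := discrim_le_zero (a := Energy m w) (b := 2 * energyForm m u w) (c := 0) fun s => by
    have := h s
    rw [energy_add_smul] at this
    linarith
  rw [discrim] at hdisc
  nlinarith

lemma energyForm_congr_right (m : ℕ) (v : ℝ × ℝ → ℝ) {w w' : ℝ × ℝ → ℝ}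
    (h : Set.EqOn w w' triangle) : energyForm m v w = energyForm m v w' := by
  refine congrArg (_ * ·) (Finset.sum_congr rfl fun e he => ?_)
  obtain ⟨x, y, hx, hy, -, rfl⟩ := exists_of_mem_edges he
  simp only [edgeProd, Sym2.lift_mk, h hx, h hy]

lemma energyForm_eq_zero_of_eqOn_zero (m : ℕ) (v : ℝ × ℝ → ℝ) {w : ℝ × ℝ → ℝ}
    (h : Set.EqOn w 0 triangle) : energyForm m v w = 0 := by
  rw [energyForm_congr_right m v h, energyForm, Finset.sum_eq_zero fun e _ => ?_, mul_zero]
  induction e using Sym2.ind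
  simp [edgeProd]

lemma energyForm_zero (v w : ℝ × ℝ → ℝ) :
    energyForm 0 v w = (v (q 0) - v (q 1)) * (w (q 0) - w (q 1)) +
      (v (q 0) - v (q 2)) * (w (q 0) - w (q 2)) + (v (q 1) - v (q 2)) * (w (q 1) - w (q 2)) := by
  have h01 := q_injective.ne (show (0 : Fin 3) ≠ 1 by decide)
  have h02 := q_injective.ne (show (0 : Fin 3) ≠ 2 by decide)
  have h12 := q_injective.ne (show (1 : Fin 3) ≠ 2 by decide)
  simp [energyForm, edges, edgeProd, Finset.sum_insert, h01, h02, h12, h01.symm, add_assoc]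

lemma energyForm_succ (m : ℕ) (v w : ℝ × ℝ → ℝ) :
    energyForm (m + 1) v w = 5 / 3 * ∑ i, energyForm m (v ∘ Fmap i) (w ∘ Fmap i) := by
  have hmap : ∀ i e, edgeProd v w (Sym2.map (Fmap i) e) = edgeProd (v ∘ Fmap i) (w ∘ Fmap i) e :=
    fun i => Sym2.ind fun x y => rfl
  simp only [energyForm, edges, Finset.sum_biUnion fun i _ j _ hij => disjoint_image_edges m hij,
    Finset.sum_image fun _ _ _ _ h => Sym2.map.injective (Fmap_injective _) h, hmap,
    Finset.mul_sum, pow_succ]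
  exact Finset.sum_congr rfl fun i _ => Finset.sum_congr rfl fun e _ => by ring

/-- Testing the energy form against `ind z` gives `(5/3)^m ∑_{y ∼ z} (v z - v y)`, so `v` is
graph-harmonic at a vertex `z` exactly when `laplacian m v z = 0`. -/
def laplacian (m : ℕ) (v : ℝ × ℝ → ℝ) (z : ℝ × ℝ) : ℝ :=
  energyForm m v (ind z)

def IsHarmonicOff (m : ℕ) (S : Set (ℝ × ℝ)) (v : ℝ × ℝ → ℝ) : Prop :=
  ∀ z ∉ S, laplacian m v z = 0

lemma IsHarmonicOff.mono {m : ℕ} {S S' : Set (ℝ × ℝ)} {v : ℝ × ℝ → ℝ}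
    (hv : IsHarmonicOff m S v) (h : S ⊆ S') : IsHarmonicOff m S' v :=
  fun z hz => hv z fun hzS => hz (h hzS)

lemma ind_apply_eq_zero {z x : ℝ × ℝ} (h : x ≠ z) : ind z x = 0 := if_neg h

lemma ind_comp_Fmap (i : Fin 3) (z : ℝ × ℝ) : ind (Fmap i z) ∘ Fmap i = ind z :=
  funext fun _ => by simp [ind, (Fmap_injective i).eq_iff]

lemma laplacian_eq_zero_of_notMem_triangle (m : ℕ) (v : ℝ × ℝ → ℝ) {z : ℝ × ℝ}
    (hz : z ∉ triangle) : laplacian m v z = 0 :=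
  energyForm_eq_zero_of_eqOn_zero m v fun _ hx => ind_apply_eq_zero fun h => hz (h ▸ hx)

lemma energyForm_comp_Fmap_ind_eq_zero (m : ℕ) (v : ℝ × ℝ → ℝ) {i : Fin 3} {z : ℝ × ℝ}
    (hz : z ∉ Fmap i '' triangle) : energyForm m v (ind z ∘ Fmap i) = 0 :=
  energyForm_eq_zero_of_eqOn_zero m v fun x hx => ind_apply_eq_zero fun h => hz ⟨x, hx, h⟩

lemma laplacian_succ_Fmap (m : ℕ) (v : ℝ × ℝ → ℝ) {i : Fin 3} {z : ℝ × ℝ}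
    (hz : ∀ j ≠ i, Fmap i z ∉ Fmap j '' triangle) :
    laplacian (m + 1) v (Fmap i z) = 5 / 3 * laplacian m (v ∘ Fmap i) z := by
  rw [laplacian, energyForm_succ, Fintype.sum_eq_single i fun j hj =>
    energyForm_comp_Fmap_ind_eq_zero m _ (hz j hj), ind_comp_Fmap, laplacian]

lemma laplacian_succ_q (m : ℕ) (v : ℝ × ℝ → ℝ) (i : Fin 3) :
    laplacian (m + 1) v (q i) = 5 / 3 * laplacian m (v ∘ Fmap i) (q i) := by
  conv_lhs => rw [← Fmap_q_self i]
  refine laplacian_succ_Fmap m v fun j hji ⟨p, hp, h⟩ => ?_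
  have := congrArg (baryCoord i) h
  rw [Fmap_q_self, baryCoord_Fmap_of_ne hji, baryCoord_q, if_pos rfl] at this
  linarith [baryCoord_le_one hp i]

lemma laplacian_succ_Fmap_q (m : ℕ) (v : ℝ × ℝ → ℝ) {i j : Fin 3} (hij : i ≠ j) :
    laplacian (m + 1) v (Fmap i (q j)) =
      5 / 3 * (laplacian m (v ∘ Fmap i) (q j) + laplacian m (v ∘ Fmap j) (q i)) := by
  have hcell : ∀ k, k ≠ i ∧ k ≠ j → Fmap i (q j) ∉ Fmap k '' triangle := by
    rintro k ⟨hki, hkj⟩ ⟨p, hp, h⟩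
    have := congrArg (baryCoord k) h
    rw [baryCoord_Fmap, baryCoord_Fmap, baryCoord_q, if_neg (Ne.symm hkj), if_neg (Ne.symm hki),
      if_pos rfl] at this
    linarith [hp k]
  rw [laplacian, energyForm_succ, Fintype.sum_eq_add i j hij fun k hk =>
    energyForm_comp_Fmap_ind_eq_zero m _ (hcell k hk), ind_comp_Fmap, Fmap_q_comm, ind_comp_Fmap,
    laplacian, laplacian]

lemma IsHarmonicOff.comp_Fmap {m : ℕ} {S S' : Set (ℝ × ℝ)} {v : ℝ × ℝ → ℝ}
    (hv : IsHarmonicOff (m + 1) S v) {i : Fin 3} (hS' : Set.range q ⊆ S')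
    (hmaps : ∀ z ∈ triangle, z ∉ S' → Fmap i z ∉ S) : IsHarmonicOff m S' (v ∘ Fmap i) := by
  intro z hz
  by_cases hzT : z ∈ triangle
  · have hcell : ∀ j ≠ i, Fmap i z ∉ Fmap j '' triangle := fun j hji ⟨p, hp, h⟩ =>
      hz (hS' ⟨j, (eq_q_of_Fmap_eq_Fmap (Ne.symm hji) hzT hp h.symm).symm⟩)
    have := hv _ (hmaps z hzT hz)
    rw [laplacian_succ_Fmap m v hcell] at this
    linarith
  · exact laplacian_eq_zero_of_notMem_triangle m _ hzT

lemma IsHarmonicOff.comp_Fmap_of_range_q {m : ℕ} {v : ℝ × ℝ → ℝ}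
    (hv : IsHarmonicOff (m + 1) (Set.range q) v) (i : Fin 3) :
    IsHarmonicOff m (Set.range q) (v ∘ Fmap i) := by
  refine hv.comp_Fmap subset_rfl fun z hz hzq ⟨k, hk⟩ => hzq ⟨k, ?_⟩
  by_cases hki : k = i
  · subst hki
    exact Fmap_injective k ((Fmap_q_self k).trans hk)
  · exact (eq_q_of_Fmap_eq_Fmap (Ne.symm hki) hz (q_mem_triangle k)
      (hk.symm.trans (Fmap_q_self k).symm)).symm

lemma q_zero_notMem_Ebot (m : ℕ) : q 0 ∉ Ebot m := by
  rintro ⟨j, -, h⟩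
  have := congrArg (baryCoord 0) h
  rw [baryCoord_q, if_pos rfl, baryCoord_xb_zero] at this
  exact one_ne_zero this

lemma Fmap_zero_notMem_Ebot {z : ℝ × ℝ} (hz : z ∈ triangle) (m : ℕ) : Fmap 0 z ∉ Ebot m := by
  rintro ⟨j, -, h⟩
  have := half_le_baryCoord_Fmap_self hz 0
  rw [h, baryCoord_xb_zero] at this
  norm_num at this

lemma range_q_subset_Eplus (m : ℕ) : Set.range q ⊆ Eplus m := by
  rintro _ ⟨k, rfl⟩
  fin_cases k
  · exact Set.mem_insert _ _
  · exact Or.inr ⟨0, Nat.zero_le _, (xb_zero m).symm⟩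
  · exact Or.inr ⟨2 ^ m, le_rfl, (xb_two_pow m).symm⟩

lemma IsHarmonicOff.comp_Fmap_zero_of_Eplus {m : ℕ} {v : ℝ × ℝ → ℝ}
    (hv : IsHarmonicOff (m + 1) (Eplus (m + 1)) v) :
    IsHarmonicOff m (Set.range q) (v ∘ Fmap 0) := by
  refine hv.comp_Fmap subset_rfl fun z hz hzq hmem => ?_
  rcases hmem with h | h
  · exact hzq ⟨0, (Fmap_injective 0 ((Fmap_q_self 0).trans h.symm))⟩
  · exact Fmap_zero_notMem_Ebot hz _ h

lemma IsHarmonicOff.comp_Fmap_of_Eplus {m : ℕ} {v : ℝ × ℝ → ℝ}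
    (hv : IsHarmonicOff (m + 1) (Eplus (m + 1)) v) {i : Fin 3} (hi : i ≠ 0) :
    IsHarmonicOff m (Eplus m) (v ∘ Fmap i) := by
  refine hv.comp_Fmap (range_q_subset_Eplus m) fun z hz hzE hmem => ?_
  rcases hmem with h | h
  · have := congrArg (baryCoord 0) h
    rw [baryCoord_Fmap_of_ne hi, baryCoord_q, if_pos rfl] at this
    linarith [baryCoord_le_one hz 0]
  · refine hzE (Or.inr ?_)
    fin_cases i
    · exact absurd rfl hi
    · exact mem_Ebot_of_Fmap_one_mem hz h
    · exact mem_Ebot_of_Fmap_two_mem hz h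

lemma laplacian_zero_q (v : ℝ × ℝ → ℝ) (i : Fin 3) :
    laplacian 0 v (q i) = 3 * v (q i) - ∑ j, v (q j) := by
  fin_cases i <;> simp [laplacian, energyForm_zero, ind, q_injective.eq_iff, Fin.sum_univ_three] <;>
    ring

lemma IsHarmonicOff.laplacian_q {m : ℕ} {v : ℝ × ℝ → ℝ} (hv : IsHarmonicOff m (Set.range q) v)
    (i : Fin 3) : laplacian m v (q i) = 3 * v (q i) - ∑ j, v (q j) := by
  induction m generalizing v i with
  | zero => exact laplacian_zero_q v i
  | succ m ih =>
    have hcell := fun k => ih (hv.comp_Fmap_of_range_q k)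
    have hjunction : ∀ a b : Fin 3, a ≠ b →
        laplacian m (v ∘ Fmap a) (q b) + laplacian m (v ∘ Fmap b) (q a) = 0 := fun a b hab => by
      have := hv _ fun ⟨k, hk⟩ => Fmap_q_ne_q hab k hk.symm
      rw [laplacian_succ_Fmap_q m v hab] at this
      linarith
    have h01 := hjunction 0 1 (by decide)
    have h02 := hjunction 0 2 (by decide)
    have h12 := hjunction 1 2 (by decide)
    rw [laplacian_succ_q, hcell]
    simp only [hcell] at h01 h02 h12
    fin_cases i <;>
      simp only [Fin.zero_eta, Fin.mk_one, Fin.reduceFinMk, Function.comp_apply, Fin.sum_univ_three,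
        Fmap_q_self, Fmap_q_comm 1 0, Fmap_q_comm 2 0, Fmap_q_comm 2 1] at h01 h02 h12 ⊢ <;>
      linarith

def topConductance : ℕ → ℝ
  | 0 => 2
  | n + 1 => 10 * topConductance n / (3 * (1 + topConductance n))

lemma topConductance_pos (n : ℕ) : 0 < topConductance n := by
  induction n with
  | zero => norm_num [topConductance]
  | succ n ih => rw [topConductance]; positivity

def trapezoid (m : ℕ) (v : ℝ × ℝ → ℝ) : ℝ :=
  (∑ j ∈ Finset.range (2 ^ m), (v (xb m j) + v (xb m (j + 1)))) / 2 ^ (m + 1)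

lemma trapezoid_comp_Fmap_one_add_two (m : ℕ) (v : ℝ × ℝ → ℝ) :
    trapezoid m (v ∘ Fmap 1) + trapezoid m (v ∘ Fmap 2) = 2 * trapezoid (m + 1) v := by
  have hsplit : 2 ^ (m + 1) = 2 ^ m + 2 ^ m := by rw [pow_succ, mul_two]
  simp only [trapezoid, Function.comp_apply, Fmap_one_xb, Fmap_two_xb, ← add_assoc]
  rw [hsplit, Finset.sum_range_add, pow_succ 2 (m + 1)]
  field_simp

lemma IsHarmonicOff.laplacian_q_zero {m : ℕ} {v : ℝ × ℝ → ℝ} (hv : IsHarmonicOff m (Eplus m) v) :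
    laplacian m v (q 0) = topConductance m * (v (q 0) - trapezoid m v) := by
  induction m generalizing v with
  | zero =>
    rw [laplacian_zero_q, topConductance, trapezoid]
    simp only [Fin.sum_univ_three, ← xb_two_pow 0, pow_zero, Finset.range_one,
      Finset.sum_singleton, xb_zero, zero_add, pow_one]
    ring
  | succ m ih =>
    have hjunction : ∀ j ≠ 0,
        laplacian m (v ∘ Fmap 0) (q j) + laplacian m (v ∘ Fmap j) (q 0) = 0 := fun j hj => by
      have hnotMem : Fmap 0 (q j) ∉ Eplus (m + 1) := by
        rintro (h | h)
        exacts [Fmap_q_ne_q hj.symm 0 h, Fmap_zero_notMem_Ebot (q_mem_triangle j) _ h]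
      have := hv _ hnotMem
      rw [laplacian_succ_Fmap_q m v hj.symm] at this
      linarith
    have ha := hjunction 1 (by decide)
    have hb := hjunction 2 (by decide)
    have hcorner := hv.comp_Fmap_zero_of_Eplus.laplacian_q
    rw [hcorner, ih (hv.comp_Fmap_of_Eplus (by decide))] at ha
    rw [hcorner, ih (hv.comp_Fmap_of_Eplus (by decide))] at hb
    have hsplit := trapezoid_comp_Fmap_one_add_two m v
    rw [laplacian_succ_q, hcorner, topConductance]
    simp only [Function.comp_apply, Fin.sum_univ_three, Fmap_q_self, Fmap_q_comm 1 0,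
      Fmap_q_comm 2 0] at ha hb ⊢
    set c := topConductance m
    have key : (1 + c) * (v (Fmap 0 (q 1)) + v (Fmap 0 (q 2))) =
        2 * v (q 0) + 2 * c * trapezoid (m + 1) v := by
      linear_combination ha + hb + c * hsplit
    have hc : 1 + c ≠ 0 := by linarith [topConductance_pos m]
    field_simp
    linear_combination (-5) * key

lemma IsHarmonicOff.of_forall_energy_le {m : ℕ} {S : Set (ℝ × ℝ)} {u : ℝ × ℝ → ℝ}
    (hmin : ∀ v, Set.EqOn v u S → Energy m u ≤ Energy m v) : IsHarmonicOff m S u :=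
  fun z hz => energyForm_eq_zero_of_forall_energy_le fun s => hmin _ fun x hx => by
    simp [ind_apply_eq_zero (ne_of_mem_of_not_mem hx hz)]

lemma sum_range_add_succ_eq (t : ℕ → ℝ) {N : ℕ} (hN : 0 < N) :
    ∑ j ∈ Finset.range N, (t j + t (j + 1)) = t 0 + 2 * ∑ j ∈ Finset.Ioo 0 N, t j + t N := by
  rw [Finset.sum_add_distrib, Finset.range_eq_Ico, Finset.sum_eq_sum_Ico_succ_bot hN,
    Finset.sum_Ico_add' t 0 N 1, Finset.sum_Ico_succ_top (by omega), Finset.Ico_add_one_left_eq_Ioo]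
  ring

/-- If `u` minimizes the level-`m` energy among all functions with the
prescribed values `t₀, …, t_{2^m}` on the bottom row, then
`u(q₀) = 2^{−(m+1)}(t₀ + 2t₁ + ⋯ + 2t_{2^m−1} + t_{2^m})`. -/
theorem stmt19 (m : ℕ) (t : ℕ → ℝ) (u : ℝ × ℝ → ℝ)
    (hu : ∀ j ≤ 2 ^ m, u (xb m j) = t j)
    (hmin : ∀ v : ℝ × ℝ → ℝ, (∀ j ≤ 2 ^ m, v (xb m j) = t j) → Energy m u ≤ Energy m v) :
    u (q 0) =
      (t 0 + 2 * ∑ j ∈ Finset.Ioo 0 (2 ^ m), t j + t (2 ^ m)) / 2 ^ (m + 1) := by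
  have hharm : IsHarmonicOff m (Ebot m) u :=
    IsHarmonicOff.of_forall_energy_le fun v hv =>
      hmin v fun j hj => (hv ⟨j, hj, rfl⟩).trans (hu j hj)
  have htop := (hharm.mono (Set.subset_insert _ _)).laplacian_q_zero
  rw [hharm _ (q_zero_notMem_Ebot m), zero_eq_mul] at htop
  have hmean : u (q 0) = trapezoid m u :=
    sub_eq_zero.1 (htop.resolve_left (topConductance_pos m).ne')
  rw [hmean, trapezoid, ← sum_range_add_succ_eq t (Nat.two_pow_pos m)]
  congr 1
  refine Finset.sum_congr rfl fun j hj => ?_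
  rw [Finset.mem_range] at hj
  rw [hu j hj.le, hu (j + 1) hj]

end SGPaper
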